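/- For n ≥ 0, let Γ_n be the directed graph with source vertices s_1, …, s_n and sink vertices t_1, …, t_{n+1}, and with arrows s_i → t_i and s_i → t_{i+1} for 1 ≤ i ≤ n. Call a subset S of the vertices successor closed if whenever s_i ∈ S one also has t_i ∈ S and t_{i+1} ∈ S. Let P_n ∈ ℤ[x,y] be the generating polynomial P_n = Σ_S x^{|S ∩ {s_1,…,s_n}|} y^{|S ∩ {t_1,…,t_{n+1}}|}, where the sum runs over all successor closed subsets S of the vertices of Γ_n. Define F : ℕ → ℤ[x,y] by F(0) = 1, F(1) = 1 + y + xy, and F(n+2) = (1 + y + xy)·F(n+1) − xy·F(n). Then for every n ≥ 1 one has P_n = (1 + y)·F(n) − xy·F(n−1). -/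
import Mathlib


open MvPolynomial

/-- A pair `(A, B)` of a set of sources `s_i` (`i : Fin n`) and a set of sinks `t_j`
(`j : Fin (n+1)`) of the coefficient quiver `Γ_n` of the preprojective Kronecker
representation `X_n` (with arrows `s_i → t_i` and `s_i → t_{i+1}`) is successor closed
if for every `s_i ∈ A` both `t_i ∈ B` and `t_{i+1} ∈ B`. -/
def SuccessorClosed {n : ℕ} (A : Finset (Fin n)) (B : Finset (Fin (n + 1))) : Prop :=
  ∀ i ∈ A, i.castSucc ∈ B ∧ i.succ ∈ B

open scoped Classical in
/-- The generating polynomial `P_n = Σ_S x^{#sources of S} y^{#sinks of S}` over all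
successor closed subsets `S` of the coefficient quiver `Γ_n`, in variables
`x = X 0`, `y = X 1`. -/
noncomputable def genPoly (n : ℕ) : MvPolynomial (Fin 2) ℤ :=
  ∑ A : Finset (Fin n), ∑ B : Finset (Fin (n + 1)),
    if SuccessorClosed A B then X 0 ^ A.card * X 1 ^ B.card else 0

open Finset


noncomputable def wt (v : Fin 2) {m : ℕ} (f : Fin m → Bool) : MvPolynomial (Fin 2) ℤ :=
  ∏ i, if f i then X v else 1

noncomputable def gAux (n : ℕ) : MvPolynomial (Fin 2) ℤ :=
  ∑ a : Fin n → Bool, ∑ b : Fin (n + 1) → Bool,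
    if (∀ i, a i = true → b i.castSucc = true ∧ b i.succ = true) then wt 0 a * wt 1 b else 0

noncomputable def qAux (n : ℕ) : MvPolynomial (Fin 2) ℤ :=
  ∑ a : Fin n → Bool, ∑ b : Fin (n + 1) → Bool,
    if ((∀ i, a i = true → b i.castSucc = true ∧ b i.succ = true) ∧ b 0 = true) then
      wt 0 a * wt 1 b else 0

lemma bool1 (b : Fin (0+1) → Bool) (hb : ¬ b = (fun _ => false)) (hb2 : ¬ b = (fun _ => true)) :
    False := by
  rcases Bool.eq_false_or_eq_true (b 0) with h | h
  · exact hb2 (funext fun i => by fin_cases i; exact h)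
  · exact hb (funext fun i => by fin_cases i; exact h)

lemma qAux_zero : qAux 0 = X 1 := by
  rw [qAux]
  rw [Fintype.sum_eq_single (fun _ => false)]
  · rw [Fintype.sum_eq_add (fun _ => false) (fun _ => true)]
    · simp [wt]
    · intro h; have := congrFun h 0; simp at this
    · rintro b ⟨hb1, hb2⟩; exact absurd (bool1 b hb1 hb2) not_false
  · intro a ha; exact absurd (funext fun i => i.elim0) ha

lemma gAux_zero : gAux 0 = 1 + X 1 := by
  rw [gAux]
  rw [Fintype.sum_eq_single (fun _ => false)]
  · rw [Fintype.sum_eq_add (fun _ => false) (fun _ => true)]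
    · simp [wt]
    · intro h; have := congrFun h 0; simp at this
    · rintro b ⟨hb1, hb2⟩; exact absurd (bool1 b hb1 hb2) not_false
  · intro a ha; exact absurd (funext fun i => i.elim0) ha

lemma sumCons {M : Type*} [AddCommMonoid M] {m : ℕ} (f : (Fin (m + 1) → Bool) → M) :
    ∑ a, f a = ∑ a' : Fin m → Bool, (f (Fin.cons false a') + f (Fin.cons true a')) := by
  rw [← (Fin.consEquiv (fun _ => Bool)).sum_comp f, Fintype.sum_prod_type_right]
  simp only [Fintype.sum_bool, Fin.consEquiv_apply]
  exact Finset.sum_congr rfl fun a' _ => add_comm _ _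

lemma wt_cons (v : Fin 2) {m : ℕ} (c : Bool) (f : Fin m → Bool) :
    wt v (Fin.cons c f) = (if c then X v else 1) * wt v f := by
  rw [wt, Fin.prod_univ_succ]
  simp [wt]

lemma cond_cons {m : ℕ} (a0 b0 : Bool) (a' : Fin m → Bool) (b' : Fin (m + 1) → Bool) :
    (∀ i : Fin (m + 1), (Fin.cons a0 a' : Fin (m + 1) → Bool) i = true →
        (Fin.cons b0 b' : Fin (m + 2) → Bool) i.castSucc = true ∧
          (Fin.cons b0 b' : Fin (m + 2) → Bool) i.succ = true)
      ↔ ((a0 = true → b0 = true ∧ b' 0 = true) ∧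
        (∀ i : Fin m, a' i = true → b' i.castSucc = true ∧ b' i.succ = true)) := by
  rw [Fin.forall_fin_succ]
  simp [← Fin.succ_castSucc]

noncomputable def pfun {m : ℕ} (a' : Fin m → Bool) (b' : Fin (m + 1) → Bool)
    (a0 b0 : Bool) : MvPolynomial (Fin 2) ℤ :=
  if (∀ i : Fin (m + 1), (Fin.cons a0 a' : Fin (m + 1) → Bool) i = true →
      (Fin.cons b0 b' : Fin (m + 2) → Bool) i.castSucc = true ∧
        (Fin.cons b0 b' : Fin (m + 2) → Bool) i.succ = true) then
    wt 0 (Fin.cons a0 a') * wt 1 (Fin.cons b0 b') else 0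

noncomputable def pfunQ {m : ℕ} (a' : Fin m → Bool) (b' : Fin (m + 1) → Bool)
    (a0 b0 : Bool) : MvPolynomial (Fin 2) ℤ :=
  if ((∀ i : Fin (m + 1), (Fin.cons a0 a' : Fin (m + 1) → Bool) i = true →
      (Fin.cons b0 b' : Fin (m + 2) → Bool) i.castSucc = true ∧
        (Fin.cons b0 b' : Fin (m + 2) → Bool) i.succ = true) ∧
      (Fin.cons b0 b' : Fin (m + 2) → Bool) 0 = true) then
    wt 0 (Fin.cons a0 a') * wt 1 (Fin.cons b0 b') else 0

lemma pointwise {m : ℕ} (a' : Fin m → Bool) (b' : Fin (m + 1) → Bool) :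
    ((pfun a' b' false false + pfun a' b' false true)
      + (pfun a' b' true false + pfun a' b' true true)) =
      (1 + X 1) * (if (∀ i, a' i = true → b' i.castSucc = true ∧ b' i.succ = true) then
          wt 0 a' * wt 1 b' else 0)
        + X 0 * X 1 * (if ((∀ i, a' i = true → b' i.castSucc = true ∧ b' i.succ = true) ∧
            b' 0 = true) then wt 0 a' * wt 1 b' else 0) := by
  simp only [pfun, cond_cons, wt_cons, if_true, if_false, one_mul]
  by_cases hsc : ∀ i, a' i = true → b' i.castSucc = true ∧ b' i.succ = true
  · by_cases hb : b' 0 = true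
    · simp [hb]
      simp only [if_pos hsc]
      ring
    · simp [hb]
      simp only [if_pos hsc]
      ring
  · simp [hsc]

lemma pointwiseQ {m : ℕ} (a' : Fin m → Bool) (b' : Fin (m + 1) → Bool) :
    ((pfunQ a' b' false false + pfunQ a' b' false true)
      + (pfunQ a' b' true false + pfunQ a' b' true true)) =
      X 1 * (if (∀ i, a' i = true → b' i.castSucc = true ∧ b' i.succ = true) then
          wt 0 a' * wt 1 b' else 0)
        + X 0 * X 1 * (if ((∀ i, a' i = true → b' i.castSucc = true ∧ b' i.succ = true) ∧
            b' 0 = true) then wt 0 a' * wt 1 b' else 0) := by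
  simp only [pfunQ, cond_cons, wt_cons, Fin.cons_zero, if_true, if_false, one_mul]
  by_cases hsc : ∀ i, a' i = true → b' i.castSucc = true ∧ b' i.succ = true
  · by_cases hb : b' 0 = true
    · simp [hb]
      simp only [if_pos hsc]
      ring
    · simp [hb]
      simp only [if_pos hsc]
      ring
  · simp [hsc]

lemma gAux_succ (m : ℕ) :
    gAux (m + 1) = (1 + X 1) * gAux m + X 0 * X 1 * qAux m := by
  rw [gAux, sumCons]
  have step : ∀ a' : Fin m → Bool,
      ((∑ b : Fin (m + 2) → Bool,
          if (∀ i : Fin (m + 1), (Fin.cons false a' : Fin (m + 1) → Bool) i = true →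
              b i.castSucc = true ∧ b i.succ = true) then
            wt 0 (Fin.cons false a') * wt 1 b else 0) +
        ∑ b : Fin (m + 2) → Bool,
          if (∀ i : Fin (m + 1), (Fin.cons true a' : Fin (m + 1) → Bool) i = true →
              b i.castSucc = true ∧ b i.succ = true) then
            wt 0 (Fin.cons true a') * wt 1 b else 0) =
      ∑ b' : Fin (m + 1) → Bool,
        ((1 + X 1) * (if (∀ i, a' i = true → b' i.castSucc = true ∧ b' i.succ = true) then
            wt 0 a' * wt 1 b' else 0)
          + X 0 * X 1 * (if ((∀ i, a' i = true → b' i.castSucc = true ∧ b' i.succ = true) ∧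
              b' 0 = true) then wt 0 a' * wt 1 b' else 0)) := by
    intro a'
    rw [sumCons (m := m + 1), sumCons (m := m + 1), ← Finset.sum_add_distrib]
    refine Finset.sum_congr rfl fun b' _ => ?_
    exact pointwise a' b'
  simp only [step]
  simp only [Finset.sum_add_distrib, ← Finset.mul_sum]
  rw [gAux, qAux]

lemma qAux_succ (m : ℕ) :
    qAux (m + 1) = X 1 * gAux m + X 0 * X 1 * qAux m := by
  rw [qAux, sumCons]
  have step : ∀ a' : Fin m → Bool,
      ((∑ b : Fin (m + 2) → Bool,
          if ((∀ i : Fin (m + 1), (Fin.cons false a' : Fin (m + 1) → Bool) i = true →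
              b i.castSucc = true ∧ b i.succ = true) ∧ b 0 = true) then
            wt 0 (Fin.cons false a') * wt 1 b else 0) +
        ∑ b : Fin (m + 2) → Bool,
          if ((∀ i : Fin (m + 1), (Fin.cons true a' : Fin (m + 1) → Bool) i = true →
              b i.castSucc = true ∧ b i.succ = true) ∧ b 0 = true) then
            wt 0 (Fin.cons true a') * wt 1 b else 0) =
      ∑ b' : Fin (m + 1) → Bool,
        (X 1 * (if (∀ i, a' i = true → b' i.castSucc = true ∧ b' i.succ = true) then
            wt 0 a' * wt 1 b' else 0)
          + X 0 * X 1 * (if ((∀ i, a' i = true → b' i.castSucc = true ∧ b' i.succ = true) ∧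
              b' 0 = true) then wt 0 a' * wt 1 b' else 0)) := by
    intro a'
    rw [sumCons (m := m + 1), sumCons (m := m + 1), ← Finset.sum_add_distrib]
    refine Finset.sum_congr rfl fun b' _ => ?_
    exact pointwiseQ a' b'
  simp only [step]
  simp only [Finset.sum_add_distrib, ← Finset.mul_sum]
  rw [gAux, qAux]

def finsetEquiv (m : ℕ) : (Fin m → Bool) ≃ Finset (Fin m) where
  toFun f := Finset.univ.filter (fun i => f i = true)
  invFun A i := decide (i ∈ A)
  left_inv f := by funext i; simp
  right_inv A := by ext i; simp

lemma mem_finsetEquiv {m : ℕ} (f : Fin m → Bool) (i : Fin m) :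
    i ∈ finsetEquiv m f ↔ f i = true := by simp [finsetEquiv]

lemma wt_eq_pow (v : Fin 2) {m : ℕ} (f : Fin m → Bool) :
    wt v f = X v ^ (finsetEquiv m f).card := by
  rw [wt, finsetEquiv]
  simp only [Equiv.coe_fn_mk]
  rw [← Finset.prod_filter, Finset.prod_const]

open scoped Classical in
lemma genPoly_eq_gAux (n : ℕ) : genPoly n = gAux n := by
  rw [genPoly, gAux, ← Equiv.sum_comp (finsetEquiv n)]
  refine Finset.sum_congr rfl fun a _ => ?_
  rw [← Equiv.sum_comp (finsetEquiv (n + 1))]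
  refine Finset.sum_congr rfl fun b _ => ?_
  refine if_congr ?_ ?_ rfl
  · unfold SuccessorClosed
    simp only [mem_finsetEquiv]
  · rw [wt_eq_pow, wt_eq_pow]

lemma main_induction (F : ℕ → MvPolynomial (Fin 2) ℤ)
    (hF0 : F 0 = 1) (hF1 : F 1 = 1 + X 1 + X 0 * X 1)
    (hrec : ∀ n : ℕ, F (n + 2) = (1 + X 1 + X 0 * X 1) * F (n + 1) - X 0 * X 1 * F n) :
    ∀ n : ℕ, gAux (n + 1) = (1 + X 1) * F (n + 1) - X 0 * X 1 * F n ∧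
      qAux (n + 1) = X 1 * F (n + 1) := by
  intro n
  induction n with
  | zero =>
    rw [gAux_succ, qAux_succ, gAux_zero, qAux_zero, hF1, hF0]
    constructor <;> ring
  | succ k ih =>
    obtain ⟨h1, h2⟩ := ih
    constructor
    · rw [gAux_succ, h1, h2, hrec]; ring
    · rw [qAux_succ, h1, h2, hrec]; ring

/-- The `F`-polynomial `P_n` of the preprojective Kronecker representation `X_n`
(realized as the generating polynomial of successor closed subsets of its coefficient
quiver) satisfies `P_n = (1 + y)·F(n) − xy·F(n−1)` for `n ≥ 1`, where `F` is the
sequence of `F`-polynomials of the homogeneous tubes, defined by `F(0) = 1`,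
`F(1) = 1 + y + xy` and `F(n+2) = (1 + y + xy)·F(n+1) − xy·F(n)`. -/
theorem genPoly_eq_tube_formula
    (F : ℕ → MvPolynomial (Fin 2) ℤ)
    (hF0 : F 0 = 1) (hF1 : F 1 = 1 + X 1 + X 0 * X 1)
    (hrec : ∀ n : ℕ, F (n + 2) = (1 + X 1 + X 0 * X 1) * F (n + 1) - X 0 * X 1 * F n) :
    ∀ n : ℕ, genPoly (n + 1) = (1 + X 1) * F (n + 1) - X 0 * X 1 * F n := by
  intro n
  rw [genPoly_eq_gAux]
  exact (main_induction F hF0 hF1 hrec n).1
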